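/- arXiv:1710.01891 — 6 statements merged into one kernel-verified Lean document; each statement's English description precedes it below -/
import Mathlib

section
/- Let f : A ⇀ B and g : C ⇀ D be partial functions. Then there exist partial functions u : A ⇀ C and v : D ⇀ B with f = u⬝g⬝v if and only if rank(f) ≤ rank(g), i.e., the cardinality of ran(f) is at most the cardinality of ran(g). -/
universe u

/-!
Applying a partial function never enlarges a set, so `rank (q ⬝ g ⬝ p) ≤ rank g`. Conversely, an
injection `e : ran f ↪ ran g` gives the factorisation: `p` sends `a` to a `g`-preimage of
`e (f a)`, and `q` inverts `e` on its image (`Function.partialInv`).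
-/

open Cardinal Function

namespace PFun

variable {α β γ : Type*}

theorem ran_comp_subset (f : β →. γ) (g : α →. β) : (f.comp g).ran ⊆ f.ran := by
  rintro c ⟨a, hc⟩
  obtain ⟨b, -, hc⟩ := Part.mem_bind_iff.mp hc
  exact ⟨b, hc⟩

theorem ran_comp_subset_image (f : β →. γ) (g : α →. β) : (f.comp g).ran ⊆ f.image g.ran := by
  rintro c ⟨a, hc⟩
  obtain ⟨b, hb, hc⟩ := Part.mem_bind_iff.mp hc
  exact ⟨b, ⟨a, hb⟩, hc⟩

theorem mk_image_le {α β : Type u} (f : α →. β) (s : Set α) : #(f.image s) ≤ #s := by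
  choose a has hb using fun b : f.image s => (f.mem_image b s).mp b.2
  refine mk_le_of_injective (f := fun b => ⟨a b, has b⟩) fun b₁ b₂ h => Subtype.ext ?_
  have ha : a b₁ = a b₂ := congrArg Subtype.val h
  exact Part.mem_unique (hb b₁) (ha ▸ hb b₂)

theorem mk_ran_comp_le {β γ : Type u} (f : β →. γ) (g : α →. β) : #(f.comp g).ran ≤ #g.ran :=
  (mk_le_mk_of_subset (ran_comp_subset_image f g)).trans (mk_image_le f g.ran)

def toRan (f : α →. β) : α →. f.ran :=
  fun a => ⟨(f a).Dom, fun h => ⟨(f a).get h, a, Part.get_mem h⟩⟩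

theorem lift_val_comp_toRan (f : α →. β) : (PFun.lift Subtype.val).comp f.toRan = f :=
  funext fun _ => Part.bind_some_eq_map _ _

theorem comp_lift_apply (f : β →. γ) (s : α → β) (a : α) : f.comp (PFun.lift s) a = f (s a) :=
  Part.bind_some (s a) f

theorem comp_lift_of_mem {f : β →. γ} {s : α → β} {k : α → γ} (h : ∀ a, k a ∈ f (s a)) :
    f.comp (PFun.lift s) = PFun.lift k := by
  ext a c
  rw [comp_lift_apply, coe_val, Part.mem_some_iff]
  exact ⟨fun hc => Part.mem_unique hc (h a), fun hc => hc ▸ h a⟩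

end PFun

/-- For partial functions `f : A ⇀ B` and `g : C ⇀ D`, there exist partial
functions `p : A ⇀ C` and `q : D ⇀ B` with `f = p⬝g⬝q` (apply `p`, then `g`, then `q`) iff
`rank f ≤ rank g`, i.e. `|ran f| ≤ |ran g|` as cardinals. -/
theorem leqJ_iff_PT {A B C D : Type u} (f : A →. B) (g : C →. D) :
    (∃ (p : A →. C) (q : D →. B), f = q.comp (g.comp p)) ↔
      Cardinal.mk ↥f.ran ≤ Cardinal.mk ↥g.ran := by
  constructor
  · rintro ⟨p, q, rfl⟩
    exact (PFun.mk_ran_comp_le q _).trans (mk_le_mk_of_subset (PFun.ran_comp_subset g p))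
  · rintro ⟨e⟩
    choose s hs using fun d : g.ran => d.2
    set j : f.ran → D := Subtype.val ∘ e
    have hj : Injective j := Subtype.val_injective.comp e.injective
    set r : D →. f.ran := fun d => partialInv j d
    have hg : g.comp (PFun.lift (s ∘ e)) = PFun.lift j := PFun.comp_lift_of_mem fun b => hs (e b)
    have hr : r.comp (PFun.lift j) = PFun.id _ := by
      rw [← PFun.coe_id]
      exact PFun.comp_lift_of_mem fun b => by simp [r, partialInv_left hj]
    refine ⟨(PFun.lift (s ∘ e)).comp f.toRan, (PFun.lift Subtype.val).comp r, ?_⟩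
    rw [PFun.comp_assoc, ← PFun.comp_assoc g, hg, ← PFun.comp_assoc r, hr, PFun.id_comp,
      PFun.lift_val_comp_toRan]
end

section
/- Let f : A ⇀ B be a partial function. Then the following are equivalent: (1) for every set D and every partial function g : B ⇀ D, if rank(f⬝g) = rank(g) then ran(f⬝g) = ran(g) (i.e., f is L-stable in the category of partial functions); (2) ran(f) is finite, or f is surjective (ran(f) = B). -/
/-!
Since `ran (f⬝g) = g[ran f] ⊆ ran g`, equality of ranks forces equality of ranges as soon as
`g[ran f]` is finite, which holds when `ran f` is finite; when `f` is surjective the two ranges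
coincide outright. Conversely, if `ran f` is infinite and misses some `b`, the partial identity
on `insert b (ran f)` has the same rank as its composite with `f`, but a strictly larger range.
-/

universe u

open Cardinal

namespace PFun

variable {α β γ : Type*}

theorem ran_comp (f : α →. β) (g : β →. γ) : (g.comp f).ran = g.image f.ran := by
  ext c
  constructor
  · rintro ⟨a, hac⟩
    obtain ⟨b, hab, hbc⟩ := Part.mem_bind_iff.1 hac
    exact ⟨b, ⟨a, hab⟩, hbc⟩
  · rintro ⟨b, ⟨a, hab⟩, hbc⟩
    exact ⟨a, Part.mem_bind_iff.2 ⟨b, hab, hbc⟩⟩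

theorem image_subset_ran (g : β →. γ) (s : Set β) : g.image s ⊆ g.ran :=
  fun _ ⟨b, _, hb⟩ => ⟨b, hb⟩

theorem image_univ (g : β →. γ) : g.image Set.univ = g.ran := by
  ext c
  simp [image_def, ran]

theorem finite_image (g : β →. γ) {s : Set β} (hs : s.Finite) : (g.image s).Finite := by
  have himage : g.image s = ⋃ b ∈ s, {c | c ∈ g b} := by
    ext
    simp [image_def]
  rw [himage]
  exact hs.biUnion fun b _ => Set.Subsingleton.finite fun _ hx _ hy => Part.mem_unique hx hy

theorem image_res_id (s t : Set α) : (res id s).image t = t ∩ s := by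
  ext a
  simp [image_def, mem_res]

theorem ran_res_id (s : Set α) : (res id s).ran = s := by
  ext a
  simp [ran, mem_res]

end PFun

theorem Set.Finite.eq_of_subset_of_mk_eq {α : Type*} {s t : Set α} (hs : s.Finite)
    (hst : s ⊆ t) (h : #s = #t) : s = t :=
  hs.eq_of_subset_of_encard_le hst (by rw [← toENat_cardinalMk, ← toENat_cardinalMk, h])

theorem Cardinal.mk_insert_of_infinite {α : Type*} {s : Set α} (hs : s.Infinite) (a : α) :
    #(insert a s : Set α) = #s := by
  by_cases ha : a ∈ s
  · rw [Set.insert_eq_of_mem ha]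
  · rw [mk_insert ha, add_one_eq (aleph0_le_mk_iff.2 hs.to_subtype)]

/-- A partial function `f : A ⇀ B` is L-stable (i.e. for every `g : B ⇀ D`,
`rank (f⬝g) = rank g` implies `ran (f⬝g) = ran g`) iff `ran f` is finite or `f` is surjective. -/
theorem L_stable_iff_PT {A B : Type u} (f : A →. B) :
    (∀ (D : Type u) (g : B →. D),
        Cardinal.mk ↥(g.comp f).ran = Cardinal.mk ↥g.ran →
          (g.comp f).ran = g.ran) ↔
      (f.ran.Finite ∨ f.ran = Set.univ) := by
  simp only [PFun.ran_comp]
  constructor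
  · intro hstable
    by_contra! ⟨hinf, hsurj⟩
    obtain ⟨b, hb⟩ := (Set.ne_univ_iff_exists_notMem _).1 hsurj
    have himage : (PFun.res id (insert b f.ran)).image f.ran = f.ran := by
      rw [PFun.image_res_id, Set.inter_eq_left.2 (Set.subset_insert b _)]
    have hran := hstable B (PFun.res id (insert b f.ran)) (by
      rw [himage, PFun.ran_res_id, mk_insert_of_infinite hinf])
    rw [himage, PFun.ran_res_id] at hran
    exact hb (hran ▸ Set.mem_insert b f.ran)
  · rintro (hfin | hsurj) D g hrank
    · exact (g.finite_image hfin).eq_of_subset_of_mk_eq (g.image_subset_ran _) hrank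
    · rw [hsurj, PFun.image_univ]
end

section
/- Fix sets X, Y and a partial function a : Y ⇀ X, and let f : X ⇀ Y. Then there exists h : X ⇀ Y with f = f⬝a⬝h (equivalently, f⬝a is R-related to f in the sandwich semigroup sense, f ∈ P₁ᵃ) if and only if ran(f) ⊆ dom(a) and a is injective on ran(f) (i.e., for all y, z ∈ ran(f), a(y) = a(z) implies y = z). Moreover these conditions are equivalent to: dom(f⬝a) = dom(f) and ker(f⬝a) = ker(f). -/
/-!
A partial function `f` factors as `h ∘ g` exactly when `dom f ⊆ dom g` and `f` is constant on the
classes of `ker g`. For `g = a ∘ f` the inclusion `dom (a ∘ f) ⊆ dom f` always holds, and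
`ker f ⊆ ker (a ∘ f)` once the domains agree, so each of the three conditions says the same thing:
`a` is defined on `ran f`, and `a ∘ f` identifies no two points with different `f`-values.
-/

/-- The kernel of a partial function, as a binary relation: `x` and `y` are related iff both lie
in the domain and have the same value. -/
def pker {α β : Type*} (f : α →. β) : α → α → Prop :=
  fun x y => x ∈ f.Dom ∧ y ∈ f.Dom ∧ f x = f y

namespace PFun

variable {α β γ : Type*}

theorem comp_apply_of_mem (g : β →. γ) {f : α →. β} {x : α} {y : β} (h : y ∈ f x) :
    g.comp f x = g y := by
  rw [comp_apply, Part.eq_some_iff.2 h]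
  exact Part.bind_some y g

theorem dom_comp_subset (g : β →. γ) (f : α →. β) : (g.comp f).Dom ⊆ f.Dom := by
  rw [dom_comp]
  exact preimage_subset_dom f g.Dom

theorem dom_subset_dom_comp_iff {g : β →. γ} {f : α →. β} :
    f.Dom ⊆ (g.comp f).Dom ↔ f.ran ⊆ g.Dom := by
  rw [dom_comp]
  constructor
  · rintro h y ⟨x, hy⟩
    obtain ⟨y', hy', hfy'⟩ := h (Part.dom_iff_mem.2 ⟨y, hy⟩)
    rwa [Part.mem_unique hy hfy']
  · intro h x hx
    obtain ⟨y, hy⟩ := Part.dom_iff_mem.1 hx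
    exact ⟨y, h ⟨x, hy⟩, hy⟩

theorem exists_comp_eq_iff {f : α →. γ} {g : α →. β} :
    (∃ h : β →. γ, f = h.comp g) ↔ f.Dom ⊆ g.Dom ∧ ∀ x x', pker g x x' → f x = f x' := by
  classical
  constructor
  · rintro ⟨h, rfl⟩
    exact ⟨dom_comp_subset h g, fun x x' ⟨_, _, hxx'⟩ => by rw [comp_apply, comp_apply, hxx']⟩
  · rintro ⟨hdom, hker⟩
    let h : β →. γ := fun u => if hu : ∃ x, u ∈ g x then f hu.choose else Part.none
    refine ⟨h, funext fun x => (?_ : f x = h.comp g x)⟩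
    by_cases hx : x ∈ g.Dom
    · obtain ⟨u, hu⟩ := Part.dom_iff_mem.1 hx
      have hex : ∃ x, u ∈ g x := ⟨x, hu⟩
      rw [comp_apply_of_mem h hu, show h u = f hex.choose from dif_pos hex]
      refine hker _ _ ⟨hx, Part.dom_iff_mem.2 ⟨u, hex.choose_spec⟩, ?_⟩
      rw [Part.eq_some_iff.2 hu, Part.eq_some_iff.2 hex.choose_spec]
    · rw [comp_apply, Part.eq_none_iff'.2 hx, Part.bind_none, Part.eq_none_iff']
      exact fun hfx => hx (hdom hfx)

theorem injOn_ran_iff {g : β →. γ} {f : α →. β} (hran : f.ran ⊆ g.Dom) :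
    Set.InjOn g f.ran ↔ ∀ x x', pker (g.comp f) x x' → f x = f x' := by
  constructor
  · rintro hinj x x' ⟨hx, hx', hxx'⟩
    obtain ⟨y, hy⟩ := Part.dom_iff_mem.1 (dom_comp_subset g f hx)
    obtain ⟨z, hz⟩ := Part.dom_iff_mem.1 (dom_comp_subset g f hx')
    rw [comp_apply_of_mem g hy, comp_apply_of_mem g hz] at hxx'
    rw [Part.eq_some_iff.2 hy, Part.eq_some_iff.2 hz, hinj ⟨x, hy⟩ ⟨x', hz⟩ hxx']
  · rintro hker y ⟨x, hy⟩ z ⟨x', hz⟩ hyz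
    have hdom := dom_subset_dom_comp_iff.2 hran
    have hxx' : pker (g.comp f) x x' :=
      ⟨hdom (Part.dom_iff_mem.2 ⟨y, hy⟩), hdom (Part.dom_iff_mem.2 ⟨z, hz⟩),
        by rw [comp_apply_of_mem g hy, comp_apply_of_mem g hz, hyz]⟩
    exact Part.mem_unique hy (hker x x' hxx' ▸ hz)

theorem pker_comp_eq_iff {g : β →. γ} {f : α →. β} (hdom : f.Dom ⊆ (g.comp f).Dom) :
    pker (g.comp f) = pker f ↔ ∀ x x', pker (g.comp f) x x' → f x = f x' := by
  constructor
  · rintro h x x' hxx'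
    rw [h] at hxx'
    exact hxx'.2.2
  · intro hker
    funext x x'
    apply propext
    constructor
    · intro hxx'
      exact ⟨dom_comp_subset g f hxx'.1, dom_comp_subset g f hxx'.2.1, hker x x' hxx'⟩
    · rintro ⟨hx, hx', hxx'⟩
      exact ⟨hdom hx, hdom hx', by rw [comp_apply, comp_apply, hxx']⟩

end PFun

/-- Fix `a : Y ⇀ X` and `f : X ⇀ Y`.  Then `f ∈ P₁ᵃ`, i.e. there exists
`h : X ⇀ Y` with `f = f⬝a⬝h`, iff `ran f ⊆ dom a` and `a` is injective on `ran f`; and these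
conditions are in turn equivalent to `dom (f⬝a) = dom f` and `ker (f⬝a) = ker f`. -/
theorem P1a_iff_PT {X Y : Type*} (a : Y →. X) (f : X →. Y) :
    ((∃ h : X →. Y, f = h.comp (a.comp f)) ↔
        (f.ran ⊆ a.Dom ∧ ∀ y ∈ f.ran, ∀ z ∈ f.ran, a y = a z → y = z)) ∧
    ((f.ran ⊆ a.Dom ∧ ∀ y ∈ f.ran, ∀ z ∈ f.ran, a y = a z → y = z) ↔
        ((a.comp f).Dom = f.Dom ∧ pker (a.comp f) = pker f)) := by
  have hdom : (a.comp f).Dom = f.Dom ↔ f.ran ⊆ a.Dom :=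
    (Set.Subset.antisymm_iff.trans (and_iff_right (PFun.dom_comp_subset a f))).trans
      PFun.dom_subset_dom_comp_iff
  have hfactor : (f.ran ⊆ a.Dom ∧ Set.InjOn a f.ran) ↔
      f.Dom ⊆ (a.comp f).Dom ∧ ∀ x x', pker (a.comp f) x x' → f x = f x' := by
    rw [← PFun.dom_subset_dom_comp_iff]
    exact and_congr_right fun h => PFun.injOn_ran_iff (PFun.dom_subset_dom_comp_iff.1 h)
  refine ⟨PFun.exists_comp_eq_iff.trans hfactor.symm, ?_⟩
  rw [hdom]
  refine and_congr_right fun hran => (PFun.injOn_ran_iff hran).trans ?_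
  exact (PFun.pker_comp_eq_iff (PFun.dom_subset_dom_comp_iff.2 hran)).symm
end

section
/- Fix sets X, Y and a partial function a : Y ⇀ X, and let f : X ⇀ Y. Then f is a regular element of the sandwich semigroup PT_XY^a, i.e., there exists g : X ⇀ Y with f = f⬝a⬝g⬝a⬝f, if and only if all three of the following hold: (1) ran(f) ⊆ dom(a); (2) a is injective on ran(f) (for all y, z ∈ ran(f), a(y) = a(z) implies y = z); and (3) every ker(f)-class meets ran(a) (for every x ∈ dom(f) there exists y ∈ ran(a) with y ∈ dom(f) and f(y) = f(x)). Thus Reg(PT_XY^a) = P₁ᵃ ∩ P₂ᵃ. -/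
/-! Reassociating, `f = f⬝a⬝g⬝a⬝f` says that `φ = a⬝g⬝a⬝f : Y ⇀ Y` fixes every point of `ran f`.
Such a `φ` forces `a` to be defined and injective on `ran f` (since `φ` factors through `a`),
and it sends `f x` to a point `f c` with `c ∈ ran a`. Conversely, injectivity of `a` on `ran f`
lets one define `g` on `a(ran f)` by sending `a (f x)` to some `t` with `f (a t) = f x`. -/

namespace PFun

variable {X Y Z : Type*}

theorem mem_comp_iff {f : Y →. Z} {g : X →. Y} {x : X} {z : Z} :
    z ∈ f.comp g x ↔ ∃ y ∈ g x, z ∈ f y :=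
  Part.mem_bind_iff

theorem comp_eq_self_iff (φ : Y →. Y) (f : X →. Y) : φ.comp f = f ↔ ∀ y ∈ f.ran, y ∈ φ y := by
  constructor
  · rintro hφ y ⟨x, hx⟩
    obtain ⟨y₀, hy₀, hy⟩ := mem_comp_iff.mp (hφ.symm ▸ hx : y ∈ φ.comp f x)
    rwa [Part.mem_unique hy₀ hx] at hy
  · refine fun hφ => PFun.ext fun x y => mem_comp_iff.trans ⟨?_, fun hy => ⟨y, hy, hφ y ⟨x, hy⟩⟩⟩
    rintro ⟨y₀, hy₀, hy⟩
    rwa [Part.mem_unique hy (hφ y₀ ⟨x, hy₀⟩)]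

theorem subset_dom_of_forall_mem_comp {ψ : X →. Y} {a : Y →. X} {S : Set Y}
    (h : ∀ y ∈ S, y ∈ ψ.comp a y) : S ⊆ a.Dom := fun y hy => by
  obtain ⟨u, hu, -⟩ := mem_comp_iff.mp (h y hy)
  exact Part.dom_iff_mem.mpr ⟨u, hu⟩

theorem injOn_of_forall_mem_comp {ψ : X →. Y} {a : Y →. X} {S : Set Y}
    (h : ∀ y ∈ S, y ∈ ψ.comp a y) : ∀ y ∈ S, ∀ z ∈ S, a y = a z → y = z := by
  intro y hy z hz hyz
  have hy' := h y hy
  rw [comp_apply, hyz] at hy'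
  exact Part.mem_unique hy' (h z hz)

theorem exists_mem_ran_of_forall_mem_comp {f : X →. Y} {a : Y →. X} {m : Y →. Y}
    (h : ∀ y ∈ f.ran, y ∈ f.comp (a.comp m) y) :
    ∀ x ∈ f.Dom, ∃ c ∈ a.ran, c ∈ f.Dom ∧ f c = f x := by
  intro x hx
  obtain ⟨y, hy⟩ := (mem_dom f x).mp hx
  obtain ⟨c, hc, hyc⟩ := mem_comp_iff.mp (h y ⟨x, hy⟩)
  obtain ⟨t, -, hct⟩ := mem_comp_iff.mp hc
  exact ⟨c, ⟨t, hct⟩, (mem_dom f c).mpr ⟨y, hyc⟩, Part.mem_right_unique hyc hy⟩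

theorem exists_extend_of_injOn (a : Y →. X) {S : Set Y} (P : Y → Z → Prop)
    (hinj : ∀ y ∈ S, ∀ z ∈ S, ∀ u ∈ a y, u ∈ a z → y = z) (hP : ∀ y ∈ S, ∃ t, P y t) :
    ∃ g : X →. Z, ∀ y ∈ S, ∀ u ∈ a y, ∃ t ∈ g u, P y t := by
  refine ⟨fun u => ⟨∃ y ∈ S, u ∈ a y, fun h => (hP _ h.choose_spec.1).choose⟩, ?_⟩
  intro y hy u hu
  have hex : ∃ y ∈ S, u ∈ a y := ⟨y, hy, hu⟩
  refine ⟨_, Part.mem_mk_iff.mpr ⟨hex, rfl⟩, ?_⟩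
  rw [hinj y hy _ hex.choose_spec.1 u hu hex.choose_spec.2]
  exact (hP _ hex.choose_spec.1).choose_spec

end PFun

open PFun in
/-- Fix `a : Y ⇀ X` and `f : X ⇀ Y`.  Then `f` is a regular element of the
sandwich semigroup `PT_XY^a`, i.e. `f = f⬝a⬝g⬝a⬝f` for some `g : X ⇀ Y`, iff
(1) `ran f ⊆ dom a`; (2) `a` is injective on `ran f`; and (3) every `ker f`-class meets
`ran a`.  Thus `Reg(PT_XY^a) = P₁ᵃ ∩ P₂ᵃ`. -/
theorem regular_iff_PT {X Y : Type*} (a : Y →. X) (f : X →. Y) :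
    (∃ g : X →. Y, f = f.comp (a.comp (g.comp (a.comp f)))) ↔
      (f.ran ⊆ a.Dom ∧
        (∀ y ∈ f.ran, ∀ z ∈ f.ran, a y = a z → y = z) ∧
        (∀ x ∈ f.Dom, ∃ y ∈ a.ran, y ∈ f.Dom ∧ f y = f x)) := by
  have hassoc (g : X →. Y) : f.comp (a.comp (g.comp (a.comp f))) =
      (f.comp (a.comp (g.comp a))).comp f := by simp only [comp_assoc]
  simp only [hassoc, eq_comm (a := f), comp_eq_self_iff]
  constructor
  · rintro ⟨g, hg⟩
    have hg' : ∀ y ∈ f.ran, y ∈ (f.comp (a.comp g)).comp a y := by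
      simpa only [comp_assoc] using hg
    exact ⟨subset_dom_of_forall_mem_comp hg', injOn_of_forall_mem_comp hg',
      exists_mem_ran_of_forall_mem_comp hg⟩
  · rintro ⟨hdom, hinj, hker⟩
    have hmeets : ∀ y ∈ f.ran, ∃ t, ∃ c ∈ a t, y ∈ f c := by
      rintro y ⟨x, hy⟩
      obtain ⟨c, ⟨t, hc⟩, -, hfc⟩ := hker x ((mem_dom f x).mpr ⟨y, hy⟩)
      exact ⟨t, c, hc, hfc ▸ hy⟩
    obtain ⟨g, hg⟩ := exists_extend_of_injOn a _
      (fun y hy z hz _ hu hu' => hinj y hy z hz (Part.mem_right_unique hu hu')) hmeets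
    refine ⟨g, fun y hy => ?_⟩
    obtain ⟨u, hu⟩ := Part.dom_iff_mem.mp (hdom hy)
    obtain ⟨t, ht, c, hc, hyc⟩ := hg y hy u hu
    exact mem_comp_iff.mpr ⟨c, mem_comp_iff.mpr ⟨t, mem_comp_iff.mpr ⟨u, hu, ht⟩, hc⟩, hyc⟩
end

section
/- Let X and Y be finite sets and a : Y ⇀ X a partial function. Then the number of idempotents of the sandwich semigroup PT_XY^a, i.e., the number of partial functions f : X ⇀ Y with f⬝a⬝f = f, equals Σ_{S ⊆ ran(a)} (|S|+1)^{|X|−|S|} · Π_{x ∈ S} |{y ∈ dom(a) : a(y) = x}|, where the sum is over all subsets S of ran(a). -/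
/-!
If `f⬝a⬝f = f`, then `e = f⬝a` is an idempotent partial transformation of `X`. Its image
`S ⊆ ran a` is its set of fixed points, on `S` the map `f` is a section of `a`, and any other
point is either outside `dom f` or is sent by `e` into `S`, after which `f = e⬝f` fixes its value.
Conversely, every triple consisting of `S`, a section of `a` over `S` and a map
`X \ S → S ∪ {undefined}` gives an idempotent. So `S` contributes
`(|S|+1)^{|X|-|S|} · Π_{x ∈ S} |a⁻¹(x)|`, which vanishes unless `S ⊆ ran a`.
-/

open Finset

namespace PTSandwich

variable {X Y : Type*}

/-- `F⬝a⬝F = F`, for partial functions encoded as `Option`-valued functions. -/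
def IsIdempotent (a : Y → Option X) (F : X → Option Y) : Prop :=
  ∀ x, ((F x).bind a).bind F = F x

/-- `⟨S, τ, σ⟩`: the fixed set `S` of `F⬝a`, the values `τ` of `F⬝a` off `S`, and the
section `σ` of `a` given by `F` on `S`. -/
abbrev IdempotentData (a : Y → Option X) : Type _ :=
  Σ S : Finset X, ({x // x ∉ S} → Option S) × ((s : S) → {y // a y = some s.1})

namespace IdempotentData

variable [DecidableEq X] {a : Y → Option X}

def retract (p : IdempotentData a) (x : X) : Option p.1 :=
  if h : x ∈ p.1 then some ⟨x, h⟩ else p.2.1 ⟨x, h⟩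

def toFun (p : IdempotentData a) (x : X) : Option Y :=
  (p.retract x).map fun s => (p.2.2 s).1

lemma retract_of_mem (p : IdempotentData a) {x : X} (h : x ∈ p.1) :
    p.retract x = some ⟨x, h⟩ := dif_pos h

lemma retract_of_not_mem (p : IdempotentData a) {x : X} (h : x ∉ p.1) :
    p.retract x = p.2.1 ⟨x, h⟩ := dif_neg h

lemma toFun_of_mem (p : IdempotentData a) {x : X} (h : x ∈ p.1) :
    p.toFun x = some (p.2.2 ⟨x, h⟩).1 := by
  rw [toFun, p.retract_of_mem h, Option.map_some]

lemma toFun_bind (p : IdempotentData a) (x : X) :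
    (p.toFun x).bind a = (p.retract x).map Subtype.val := by
  rw [toFun, Option.bind_map, Option.map_eq_bind]
  exact Option.bind_congr fun s _ => (p.2.2 s).2

lemma toFun_eq_bind (p : IdempotentData a) {F : X → Option Y}
    (hF : ∀ s : p.1, F s = some (p.2.2 s).1) (x : X) :
    p.toFun x = ((p.retract x).map Subtype.val).bind F := by
  rw [toFun, Option.bind_map, Option.map_eq_bind]
  exact Option.bind_congr fun s _ => (hF s).symm

lemma isIdempotent_toFun (p : IdempotentData a) : IsIdempotent a p.toFun := fun x => by
  rw [toFun_bind, ← p.toFun_eq_bind fun s => p.toFun_of_mem s.2]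

lemma mem_iff_toFun_bind (p : IdempotentData a) (x : X) :
    x ∈ p.1 ↔ (p.toFun x).bind a = some x := by
  rw [toFun_bind]
  by_cases h : x ∈ p.1
  · simp [h, p.retract_of_mem h]
  · simp only [h, false_iff, p.retract_of_not_mem h, Option.map_eq_some_iff, not_exists, not_and]
    exact fun s _ hs => h (hs ▸ s.2)

lemma toFun_injective : Function.Injective (toFun (a := a)) := by
  rintro ⟨S, τ, σ⟩ ⟨S', τ', σ'⟩ h
  obtain rfl : S = S' := Finset.ext fun x => (mem_iff_toFun_bind ⟨S, τ, σ⟩ x).trans <| by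
    rw [h]; exact (mem_iff_toFun_bind _ x).symm
  obtain rfl : σ = σ' := funext fun s => Subtype.ext <| Option.some.inj <|
    (toFun_of_mem ⟨S, τ, σ⟩ s.2).symm.trans <| by rw [h]; exact toFun_of_mem _ s.2
  obtain rfl : τ = τ' := funext fun x => Option.map_injective Subtype.val_injective <| by
    have hx := congrArg (·.bind a) (congrFun h x)
    simp only [toFun_bind] at hx
    rwa [retract_of_not_mem ⟨S, τ, σ⟩ x.2, retract_of_not_mem ⟨S, τ', σ⟩ x.2] at hx
  rfl

end IdempotentData

section FixedSet

variable [Fintype X] [DecidableEq X] {a : Y → Option X} {F : X → Option Y}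

def fixedSet (a : Y → Option X) (F : X → Option Y) : Finset X :=
  univ.filter fun x => (F x).bind a = some x

lemma mem_fixedSet {x : X} : x ∈ fixedSet a F ↔ (F x).bind a = some x := by
  simp [fixedSet]

lemma IsIdempotent.bind_mem_fixedSet (hF : IsIdempotent a F) {x s : X}
    (h : (F x).bind a = some s) : s ∈ fixedSet a F := by
  obtain ⟨y, hy, hys⟩ := Option.bind_eq_some_iff.1 h
  have hFs : F s = some y := by
    have := hF x
    rwa [h, Option.bind_some, hy] at this
  rw [mem_fixedSet, hFs, Option.bind_some, hys]

lemma IsIdempotent.exists_toFun_eq (hF : IsIdempotent a F) :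
    ∃ p : IdempotentData a, p.toFun = F := by
  have hσ (s : fixedSet a F) : ∃ y, F s = some y ∧ a y = some s.1 :=
    Option.bind_eq_some_iff.1 (mem_fixedSet.1 s.2)
  choose σ hσF hσa using hσ
  let p : IdempotentData a := ⟨fixedSet a F,
    fun x => ((F x).bind a).pmap Subtype.mk fun _ => hF.bind_mem_fixedSet,
    fun s => ⟨σ s, hσa s⟩⟩
  have hretract (x : X) : (p.retract x).map Subtype.val = (F x).bind a := by
    by_cases hx : x ∈ p.1
    · rw [p.retract_of_mem hx, Option.map_some, mem_fixedSet.1 hx]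
    · rw [p.retract_of_not_mem hx, Option.map_pmap, Option.pmap_eq_map, Option.map_id']
  refine ⟨p, funext fun x => ?_⟩
  rw [p.toFun_eq_bind hσF, hretract, hF x]

end FixedSet

section Counting

variable [Fintype X] [DecidableEq X] [Fintype Y] (a : Y → Option X)

lemma card_idempotentData : Nat.card (IdempotentData a) =
    ∑ S : Finset X,
      (#S + 1) ^ (Fintype.card X - #S) * ∏ x ∈ S, Nat.card {y // a y = some x} := by
  simp only [Nat.card_eq_fintype_card, Fintype.card_sigma, Fintype.card_prod, Fintype.card_fun,
    Fintype.card_option, Fintype.card_coe, Fintype.card_subtype_compl, Fintype.card_pi]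
  exact Finset.sum_congr rfl fun S _ =>
    congrArg _ (prod_coe_sort S fun x => Fintype.card {y // a y = some x})

theorem card_isIdempotent : Nat.card {F // IsIdempotent a F} =
    ∑ S : Finset X,
      (#S + 1) ^ (Fintype.card X - #S) * ∏ x ∈ S, Nat.card {y // a y = some x} := by
  rw [← card_idempotentData]
  refine (Nat.card_eq_of_bijective (fun p => ⟨p.toFun, p.isIdempotent_toFun⟩) ⟨?_, ?_⟩).symm
  · exact fun p q h => IdempotentData.toFun_injective (congrArg Subtype.val h)
  · exact fun F => F.2.exists_toFun_eq.imp fun _ hp => Subtype.ext hp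

end Counting

end PTSandwich

lemma Part.equivOption_bind {α β : Type*} (o : Part α) (f : α → Part β) :
    Part.equivOption (o.bind f) = (Part.equivOption o).bind fun a => Part.equivOption (f a) := by
  classical
  simp only [Part.equivOption, Equiv.coe_fn_mk]
  rw [Part.bind_toOption]
  cases o.toOption <;> rfl

lemma PFun.equivOption_comp_apply {α β γ : Type*} (f : β →. γ) (g : α →. β) (x : α) :
    Part.equivOption (f.comp g x) =
      (Part.equivOption (g x)).bind fun y => Part.equivOption (f y) := by
  rw [PFun.comp_apply]
  exact Part.equivOption_bind _ fun y => f y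

lemma PFun.comp_comp_eq_self_iff {X Y : Type*} (a : Y →. X) (f : X →. Y) :
    f.comp (a.comp f) = f ↔
      PTSandwich.IsIdempotent (fun y => Part.equivOption (a y))
        (fun x => Part.equivOption (f x)) := by
  simp only [PTSandwich.IsIdempotent, ← PFun.equivOption_comp_apply,
    Part.equivOption.apply_eq_iff_eq]
  exact funext_iff

noncomputable def PFun.idempotentsEquivOption {X Y : Type*} (a : Y →. X) :
    {f : X →. Y // f.comp (a.comp f) = f} ≃
      {F : X → Option Y // PTSandwich.IsIdempotent (fun y => Part.equivOption (a y)) F} :=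
  Equiv.subtypeEquiv (Equiv.piCongrRight fun _ => Part.equivOption) (PFun.comp_comp_eq_self_iff a)

/-- For finite `X`, `Y` and `a : Y ⇀ X`, the number of idempotents of the
sandwich semigroup `PT_XY^a` (partial functions `f : X ⇀ Y` with `f⬝a⬝f = f`) equals
`Σ_{S ⊆ ran a} (|S|+1)^{|X|−|S|} · Π_{x ∈ S} |a⁻¹(x)|`. -/
theorem card_idempotents_PTXYa {X Y : Type*} [Fintype X] [Fintype Y] (a : Y →. X) :
    Nat.card {f : X →. Y // f.comp (a.comp f) = f} =
      ∑ S ∈ (a.ran.toFinite.toFinset).powerset,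
        (S.card + 1) ^ (Fintype.card X - S.card) *
          ∏ x ∈ S, Nat.card {y : Y // x ∈ a y} := by
  classical
  have hfiber (x : X) :
      Nat.card {y // Part.equivOption (a y) = some x} = Nat.card {y // x ∈ a y} :=
    Nat.card_congr (Equiv.subtypeEquivRight fun y => Part.toOption_eq_some_iff)
  have hvanish (S : Finset X) (hS : S ∉ (a.ran.toFinite.toFinset).powerset) :
      ∏ x ∈ S, Nat.card {y // x ∈ a y} = 0 := by
    obtain ⟨x, hxS, hxa⟩ := Finset.not_subset.1 (Finset.mem_powerset.not.1 hS)
    refine Finset.prod_eq_zero hxS (Nat.card_eq_zero.2 (Or.inl ⟨fun y => hxa ?_⟩))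
    exact a.ran.toFinite.mem_toFinset.2 ⟨y, y.2⟩
  rw [Nat.card_congr (PFun.idempotentsEquivOption a), PTSandwich.card_isIdempotent]
  simp only [hfiber]
  exact (Finset.sum_subset (Finset.subset_univ _) fun S _ hS => by rw [hvanish S hS, mul_zero]).symm
end

section
/- Fix sets X, Y and a partial function a : Y ⇀ X whose rank α = |ran(a)| is finite. Let μ be a natural number with μ + 2 ≤ α, and let f : X ⇀ Y be a partial function with rank(f) = μ. Then there exist partial functions g, h : X ⇀ Y with rank(g) = rank(h) = μ + 1 and f = g⬝a⬝h (i.e., f = g ⋆_a h). In other words, in PT_XY^a, D_μ ⊆ D_{μ+1} ⋆_a D_{μ+1} whenever μ ≤ α − 2. -/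
open Function

private lemma pfun_sandwich_aux {X Y : Type*} (a : Y →. X) (μ : ℕ) (f : X →. Y)
    (xi : Fin (μ + 2) → X) (hxi : Injective xi)
    (yi : Fin (μ + 2) → Y) (hyi : ∀ i, a (yi i) = Part.some (xi i))
    (k : X → Fin (μ + 2)) (S : Set (Fin (μ + 2))) (val : Fin (μ + 2) → Y)
    (hk : Set.range k = {j : Fin (μ + 2) | (j : ℕ) ≤ μ})
    (hvS : (val '' S).ncard = μ + 1)
    (hcomp₁ : ∀ x, k x ∈ S → f x = Part.some (val (k x)))
    (hcomp₂ : ∀ x, k x ∉ S → f x = Part.none) :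
    ∃ g h : X →. Y, g.ran.ncard = μ + 1 ∧ h.ran.ncard = μ + 1 ∧
      f = h.comp (a.comp g) := by
  classical
  have hyi_inj : Injective yi := by
    intro i j hij
    apply hxi
    have h1 := hyi i
    rw [hij, hyi j] at h1
    exact (Part.some_inj.mp h1).symm
  set g : X →. Y := fun x => Part.some (yi (k x)) with hg
  set h : X →. Y := fun x =>
    if hx : ∃ i, i ∈ S ∧ xi i = x then Part.some (val hx.choose) else Part.none with hhdef
  have hhx : ∀ i ∈ S, h (xi i) = Part.some (val i) := by
    intro i hi
    have hex : ∃ j, j ∈ S ∧ xi j = xi i := ⟨i, hi, rfl⟩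
    have hch : hex.choose = i := hxi hex.choose_spec.2
    simp only [hhdef, dif_pos hex, hch]
  have hhx' : ∀ x, (¬ ∃ i, i ∈ S ∧ xi i = x) → h x = Part.none := fun x hx => by
    simp only [hhdef, dif_neg hx]
  refine ⟨g, h, ?_, ?_, ?_⟩
  · -- rank of g
    have hr : g.ran = Set.range (fun i : Fin (μ + 1) => yi (Fin.castLE (by omega) i)) := by
      ext y
      simp only [PFun.ran, hg, Part.mem_some_iff, Set.mem_setOf_eq, Set.mem_range]
      constructor
      · rintro ⟨x, rfl⟩
        have hmem : k x ∈ Set.range k := ⟨x, rfl⟩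
        rw [hk] at hmem
        exact ⟨⟨(k x : ℕ), Nat.lt_succ_of_le hmem⟩, congrArg yi (Fin.ext rfl)⟩
      · rintro ⟨i, rfl⟩
        have hmem : (Fin.castLE (by omega : μ + 1 ≤ μ + 2) i) ∈ Set.range k := by
          rw [hk]
          simpa using Nat.lt_succ_iff.mp i.isLt
        obtain ⟨x, hx⟩ := hmem
        exact ⟨x, by rw [hx]⟩
    have hinj : Injective (fun i : Fin (μ + 1) => yi (Fin.castLE (by omega) i)) :=
      hyi_inj.comp (Fin.castLE_injective _)
    rw [hr, ← Set.image_univ, Set.ncard_image_of_injective _ hinj, Set.ncard_univ,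
      Nat.card_eq_fintype_card, Fintype.card_fin]
  · -- rank of h
    have hr : h.ran = val '' S := by
      ext y
      simp only [PFun.ran, Set.mem_setOf_eq]
      constructor
      · rintro ⟨x, hy⟩
        by_cases hx : ∃ i, i ∈ S ∧ xi i = x
        · obtain ⟨i, hi, rfl⟩ := hx
          rw [hhx i hi, Part.mem_some_iff] at hy
          exact ⟨i, hi, hy.symm⟩
        · rw [hhx' x hx] at hy
          exact absurd hy (Part.notMem_none y)
      · rintro ⟨i, hi, rfl⟩
        exact ⟨xi i, by rw [hhx i hi]; exact Part.mem_some _⟩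
    rw [hr, hvS]
  · -- composition
    funext x
    rw [PFun.comp_apply, PFun.comp_apply, hg]
    simp only [Part.bind_some]
    rw [Part.bind_some (f := a), hyi (k x), Part.bind_some (f := h)]
    by_cases hx : k x ∈ S
    · rw [hcomp₁ x hx, hhx (k x) hx]
    · rw [hcomp₂ x hx, hhx' (xi (k x))]
      rintro ⟨i, hi, hix⟩
      exact hx (hxi hix ▸ hi)

/-- Let `a : Y ⇀ X` have finite rank `α = |ran a|`, let `μ` be a natural
number with `μ + 2 ≤ α`, and let `f : X ⇀ Y` have rank `μ`.  Then `f = g ⋆_a h = g⬝a⬝h` for some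
partial functions `g, h : X ⇀ Y` of rank `μ + 1`; that is, `D_μ ⊆ D_{μ+1} ⋆_a D_{μ+1}`. -/
theorem Dmu_sub_Dmu_succ_star_Dmu_succ {X Y : Type*} (a : Y →. X)
    (ha : a.ran.Finite) (μ : ℕ) (hμ : μ + 2 ≤ a.ran.ncard)
    (f : X →. Y) (hf : f.ran.Finite) (hrank : f.ran.ncard = μ) :
    ∃ g h : X →. Y, g.ran.ncard = μ + 1 ∧ h.ran.ncard = μ + 1 ∧
      f = h.comp (a.comp g) := by
  classical
  -- pick μ+2 distinct elements of ran a, with preimages under a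
  have hT : μ + 2 ≤ ha.toFinset.card := by
    rwa [← Set.ncard_eq_toFinset_card _ ha]
  obtain ⟨T, hTsub, hTcard⟩ := Finset.exists_subset_card_eq hT
  let eT := T.equivFinOfCardEq hTcard
  set xi : Fin (μ + 2) → X := fun i => ((eT.symm i : T) : X) with hxidef
  have hxi : Injective xi := by
    intro i j hij
    exact eT.symm.injective (Subtype.ext hij)
  have hxiran : ∀ i, xi i ∈ a.ran := fun i => ha.mem_toFinset.mp (hTsub (eT.symm i).2)
  choose yi hyi' using hxiran
  have hyi : ∀ i, a (yi i) = Part.some (xi i) := fun i => Part.eq_some_iff.mpr (hyi' i)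
  have hyi_inj : Injective yi := by
    intro i j hij
    apply hxi
    have h1 := hyi i
    rw [hij, hyi j] at h1
    exact (Part.some_inj.mp h1).symm
  -- enumerate ran f
  have hFcard : hf.toFinset.card = μ := by rw [← Set.ncard_eq_toFinset_card _ hf]; exact hrank
  let e := hf.toFinset.equivFinOfCardEq hFcard
  set z : Fin μ → Y := fun i => ((e.symm i : hf.toFinset) : Y) with hzdef
  have hmemz : ∀ {x : X} (hx : (f x).Dom), (f x).get hx ∈ hf.toFinset := fun {x} hx =>
    hf.mem_toFinset.mpr ⟨_, Part.get_mem hx⟩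
  have hz_get : ∀ {x : X} (hx : (f x).Dom),
      z (e ⟨(f x).get hx, hmemz hx⟩) = (f x).get hx := by
    intro x hx
    simp [hzdef]
  have hranz : Set.range z = f.ran := by
    ext y
    constructor
    · rintro ⟨i, rfl⟩
      exact hf.mem_toFinset.mp (e.symm i).2
    · intro hy
      exact ⟨e ⟨y, hf.mem_toFinset.mpr hy⟩, by simp [hzdef]⟩
  have hzeq : ∀ {x : X} {i : Fin μ} (hx : (f x).Dom), z i ∈ f x →
      e ⟨(f x).get hx, hmemz hx⟩ = i := by
    intro x i hx hmem
    have hget : (f x).get hx = z i := Part.get_eq_of_mem hmem _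
    have hsub : (⟨(f x).get hx, hmemz hx⟩ : hf.toFinset) = e.symm i :=
      Subtype.ext hget
    rw [hsub, Equiv.apply_symm_apply]
  -- a fresh value outside ran f
  have hfresh : ∃ i : Fin (μ + 2), yi i ∉ f.ran := by
    by_contra hcon
    push_neg at hcon
    have hinj2 : Injective
        (fun i : Fin (μ + 2) => (⟨yi i, hf.mem_toFinset.mpr (hcon i)⟩ : hf.toFinset)) :=
      fun i j hij => hyi_inj (congrArg Subtype.val hij)
    have hle := Fintype.card_le_of_injective _ hinj2
    simp only [Fintype.card_fin, Fintype.card_coe, hFcard] at hle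
    omega
  obtain ⟨j', hj'⟩ := hfresh
  by_cases hdom : ∀ x, (f x).Dom
  · -- Case B : f is total; some fiber of f has ≥ 2 elements
    set q : X → Fin μ := fun x => e ⟨(f x).get (hdom x), hmemz (hdom x)⟩ with hq
    have hzq : ∀ x, z (q x) = (f x).get (hdom x) := fun x => hz_get (hdom x)
    have hqex : ∃ x₀ x₁, x₀ ≠ x₁ ∧ q x₀ = q x₁ := by
      by_contra hcon
      push_neg at hcon
      have hqinj : Injective q := by
        intro x y hxy
        by_contra hne
        exact hcon x y hne hxy
      have hle := Fintype.card_le_of_injective _ (hqinj.comp hxi)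
      simp only [Fintype.card_fin] at hle
      omega
    obtain ⟨x₀, x₁, hne01, hq01⟩ := hqex
    set k : X → Fin (μ + 2) := fun x =>
      if x = x₀ then ⟨μ, by omega⟩ else Fin.castLE (by omega) (q x) with hkdef
    set val : Fin (μ + 2) → Y := fun jj =>
      if hjlt : (jj : ℕ) < μ then z ⟨jj, hjlt⟩
      else if (jj : ℕ) = μ then z (q x₀) else yi j' with hvaldef
    have hval_lt : ∀ (jj : Fin (μ + 2)) (hlt : (jj : ℕ) < μ), val jj = z ⟨jj, hlt⟩ := by
      intro jj hlt
      rw [hvaldef]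
      simp only [dif_pos hlt]
    have hval_eq : ∀ (jj : Fin (μ + 2)), (jj : ℕ) = μ → val jj = z (q x₀) := by
      intro jj hjj
      rw [hvaldef]
      simp only [dif_neg (by omega : ¬ (jj : ℕ) < μ), if_pos hjj]
    have hval_gt : ∀ (jj : Fin (μ + 2)), μ < (jj : ℕ) → val jj = yi j' := by
      intro jj hjj
      rw [hvaldef]
      simp only [dif_neg (by omega : ¬ (jj : ℕ) < μ), if_neg (by omega : ¬ (jj : ℕ) = μ)]
    have hval_cast : ∀ i : Fin μ, val (Fin.castLE (by omega) i) = z i := fun i =>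
      (hval_lt _ (by simpa using i.isLt)).trans (congrArg z (Fin.ext rfl))
    have hval_mu : val ⟨μ, by omega⟩ = z (q x₀) := hval_eq _ rfl
    have hval_top : val ⟨μ + 1, by omega⟩ = yi j' := hval_gt _ (Nat.lt_succ_self μ)
    refine pfun_sandwich_aux a μ f xi hxi yi hyi k Set.univ val ?_ ?_ ?_ ?_
    · ext jj
      simp only [Set.mem_range, Set.mem_setOf_eq, hkdef]
      constructor
      · rintro ⟨x, rfl⟩
        split
        · simp
        · simp only [Fin.coe_castLE]
          omega
      · intro hjj
        by_cases hjm : (jj : ℕ) = μ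
        · exact ⟨x₀, by rw [if_pos rfl]; exact Fin.ext hjm.symm⟩
        · have hlt : (jj : ℕ) < μ := by omega
          have hzr : z ⟨jj, hlt⟩ ∈ f.ran := hranz ▸ ⟨_, rfl⟩
          obtain ⟨x, hx⟩ := hzr
          have hqx : q x = ⟨jj, hlt⟩ := hzeq (hdom x) hx
          by_cases hxx : x = x₀
          · refine ⟨x₁, ?_⟩
            rw [if_neg (Ne.symm hne01), ← hq01, ← hxx, hqx]
            exact Fin.ext rfl
          · refine ⟨x, ?_⟩
            rw [if_neg hxx, hqx]
            exact Fin.ext rfl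
    · rw [Set.image_univ]
      have hrv : Set.range val = insert (yi j') f.ran := by
        ext y
        simp only [Set.mem_range, Set.mem_insert_iff]
        constructor
        · rintro ⟨jj, rfl⟩
          rcases lt_trichotomy ((jj : ℕ)) μ with hc | hc | hc
          · right; rw [hval_lt jj hc, ← hranz]; exact ⟨_, rfl⟩
          · right; rw [hval_eq jj hc, ← hranz]; exact ⟨_, rfl⟩
          · left; rw [hval_gt jj hc]
        · rintro (rfl | hy)
          · exact ⟨⟨μ + 1, by omega⟩, hval_top⟩
          · rw [← hranz] at hy
            obtain ⟨i, rfl⟩ := hy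
            exact ⟨Fin.castLE (by omega) i, hval_cast i⟩
      rw [hrv, Set.ncard_insert_of_notMem hj' hf, hrank]
    · intro x _
      by_cases hxx : x = x₀
      · have hkx : k x = ⟨μ, by omega⟩ := by rw [hkdef]; simp only [if_pos hxx]
        rw [hkx, hval_mu, ← hxx, hzq]
        exact (Part.some_get (hdom x)).symm
      · have hkx : k x = Fin.castLE (by omega) (q x) := by
          rw [hkdef]; simp only [if_neg hxx]
        rw [hkx, hval_cast, hzq]
        exact (Part.some_get (hdom x)).symm
    · intro x hx
      exact absurd (Set.mem_univ _) hx
  · -- Case A : f is not total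
    push_neg at hdom
    obtain ⟨x₀, hx₀⟩ := hdom
    set k : X → Fin (μ + 2) := fun x =>
      if hx : (f x).Dom then Fin.castLE (by omega) (e ⟨(f x).get hx, hmemz hx⟩)
      else ⟨μ, by omega⟩ with hkdef
    set S : Set (Fin (μ + 2)) := {jj | (jj : ℕ) ≠ μ} with hSdef
    set val : Fin (μ + 2) → Y := fun jj =>
      if hjlt : (jj : ℕ) < μ then z ⟨jj, hjlt⟩ else yi j' with hvaldef
    have hval_lt : ∀ (jj : Fin (μ + 2)) (hlt : (jj : ℕ) < μ), val jj = z ⟨jj, hlt⟩ := by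
      intro jj hlt
      rw [hvaldef]
      simp only [dif_pos hlt]
    have hval_ge : ∀ (jj : Fin (μ + 2)), ¬ (jj : ℕ) < μ → val jj = yi j' := by
      intro jj hjj
      rw [hvaldef]
      simp only [dif_neg hjj]
    have hval_cast : ∀ i : Fin μ, val (Fin.castLE (by omega) i) = z i := fun i =>
      (hval_lt _ (by simpa using i.isLt)).trans (congrArg z (Fin.ext rfl))
    refine pfun_sandwich_aux a μ f xi hxi yi hyi k S val ?_ ?_ ?_ ?_
    · ext jj
      simp only [Set.mem_range, Set.mem_setOf_eq, hkdef]
      constructor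
      · rintro ⟨x, rfl⟩
        split
        · simp only [Fin.coe_castLE]
          omega
        · simp
      · intro hjj
        by_cases hjm : (jj : ℕ) = μ
        · refine ⟨x₀, ?_⟩
          rw [dif_neg hx₀]
          exact Fin.ext hjm.symm
        · have hlt : (jj : ℕ) < μ := by omega
          have hzr : z ⟨jj, hlt⟩ ∈ f.ran := hranz ▸ ⟨_, rfl⟩
          obtain ⟨x, hx⟩ := hzr
          have hxd : (f x).Dom := Part.dom_iff_mem.mpr ⟨_, hx⟩
          refine ⟨x, ?_⟩
          rw [dif_pos hxd, hzeq hxd hx]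
          exact Fin.ext rfl
    · have hrv : val '' S = insert (yi j') f.ran := by
        ext y
        simp only [Set.mem_image, Set.mem_insert_iff, hSdef, Set.mem_setOf_eq]
        constructor
        · rintro ⟨jj, hjj, rfl⟩
          by_cases hc : (jj : ℕ) < μ
          · right; rw [hval_lt jj hc, ← hranz]; exact ⟨_, rfl⟩
          · left; rw [hval_ge jj hc]
        · rintro (rfl | hy)
          · exact ⟨⟨μ + 1, by omega⟩, Nat.succ_ne_self μ,
              hval_ge _ (by omega : ¬ μ + 1 < μ)⟩
          · rw [← hranz] at hy
            obtain ⟨i, rfl⟩ := hy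
            refine ⟨Fin.castLE (by omega) i, ?_, hval_cast i⟩
            simpa using Nat.ne_of_lt i.isLt
      rw [hrv, Set.ncard_insert_of_notMem hj' hf, hrank]
    · intro x hmemS
      by_cases hxd : (f x).Dom
      · have hkx : k x = Fin.castLE (by omega) (e ⟨(f x).get hxd, hmemz hxd⟩) := by
          rw [hkdef]; simp only [dif_pos hxd]
        rw [hkx, hval_cast, hz_get hxd]
        exact (Part.some_get hxd).symm
      · exfalso
        have hkx : k x = ⟨μ, by omega⟩ := by
          rw [hkdef]; simp only [dif_neg hxd]
        rw [hkx, hSdef] at hmemS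
        simp at hmemS
    · intro x hmemS
      by_cases hxd : (f x).Dom
      · exfalso
        have hkx : k x = Fin.castLE (by omega) (e ⟨(f x).get hxd, hmemz hxd⟩) := by
          rw [hkdef]; simp only [dif_pos hxd]
        rw [hkx, hSdef] at hmemS
        simp only [Set.mem_setOf_eq, not_not] at hmemS
        have := (e ⟨(f x).get hxd, hmemz hxd⟩).isLt
        simp only [Fin.coe_castLE] at hmemS
        omega
      · exact Part.eq_none_iff'.mpr hxd
end
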